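/- arXiv:2103.02963 — 2 statements merged into one kernel-verified Lean document; each statement's English description precedes it below -/
import Mathlib

section
/- Let k be a field of characteristic ≠ 2 and let E be a k-vector space of dimension 2n with a nondegenerate symmetric bilinear form B. Let N and N' be Lagrangians of (E, B), and let φ be an isometry of (E, B) with φ(N) = N'. Then det φ = (−1)^{n−q}, where q = dim_k(N ∩ N'). -/
open Module

/-- The orthogonal complement of a submodule with respect to a bilinear form:
`perpB B N = {x | B(x,y) = 0 for all y ∈ N}`. -/
def perpB {k M : Type*} [Field k] [AddCommGroup M] [Module k M]
    (B : M →ₗ[k] M →ₗ[k] k) (N : Submodule k M) : Submodule k M where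
  carrier := {x | ∀ y ∈ N, B x y = 0}
  add_mem' := by
    intro a b ha hb y hy
    simp [map_add, ha y hy, hb y hy]
  zero_mem' := by
    intro y hy
    simp
  smul_mem' := by
    intro c a ha y hy
    simp [map_smul, ha y hy]


/-! Induct on `n - q`. If `q = n` then `φ` stabilises `N`; pairing through `B` identifies
`E ⧸ N` with the dual of `N`, and the map `φ` induces on `E ⧸ N` with the inverse transpose of
`φ|_N`, so `det φ = det (φ|_N) · det (φ|_N)⁻¹ = 1`. If `q < n`, pick `f ∈ N' \ N` and `e ∈ N`
with `B e f = 1`. The reflection `ρ` along `v = e - f` (note `B v v = -2`) has determinant `-1`,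
sends `e` to `f` and fixes `N ∩ N'`, so `ρ N ∩ N' = (N ∩ N') ⊕ k f` and the isometry `φ ρ`,
which maps the Lagrangian `ρ N` onto `N'`, is covered by the induction hypothesis. -/

section

open LinearMap

variable {k E : Type*} [Field k] [AddCommGroup E] [Module k E]

lemma LinearMap.det_mul_det_eq_one_of_dualMap_comp {V W : Type*} [AddCommGroup V] [Module k V]
    [FiniteDimensional k V] [AddCommGroup W] [Module k W] (f : V →ₗ[k] V) (g : W →ₗ[k] W)
    (e : W ≃ₗ[k] Dual k V) (h : f.dualMap ∘ₗ e.toLinearMap ∘ₗ g = e.toLinearMap) :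
    f.det * g.det = 1 := by
  have hid : (e.symm.toLinearMap ∘ₗ f.dualMap ∘ₗ e.toLinearMap) ∘ₗ g = LinearMap.id := by
    ext x
    simpa using congrArg e.symm (LinearMap.congr_fun h x)
  rw [← det_dualMap, ← det_conj f.dualMap e.symm, ← det_comp]
  simpa using congrArg LinearMap.det hid

def IsLagrangian (B : E →ₗ[k] E →ₗ[k] k) (N : Submodule k E) : Prop :=
  N = perpB B N

variable {B : E →ₗ[k] E →ₗ[k] k} {N N' : Submodule k E}

namespace IsLagrangian

lemma mem_iff (hN : IsLagrangian B N) {x : E} : x ∈ N ↔ ∀ y ∈ N, B x y = 0 :=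
  Iff.of_eq (congrArg (x ∈ ·) hN)

lemma apply_eq_zero (hN : IsLagrangian B N) {x y : E} (hx : x ∈ N) (hy : y ∈ N) :
    B x y = 0 :=
  hN.mem_iff.1 hx y hy

lemma two_mul_finrank [FiniteDimensional k E] (hN : IsLagrangian B N) (hB : B.IsRefl)
    (hB' : B.Nondegenerate) : 2 * finrank k N = finrank k E := by
  have hperp : perpB B N = BilinForm.orthogonal B N := by
    ext x
    exact forall₂_congr fun y _ => hB.eq_iff
  have := BilinForm.finrank_orthogonal hB' N
  rw [← hperp, ← hN] at this
  have := Submodule.finrank_le N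
  omega

lemma map {g : E →ₗ[k] E} (hN : IsLagrangian B N) (hg : Function.Surjective g)
    (hBg : B.IsOrthogonal g) : IsLagrangian B (N.map g) := by
  ext x
  obtain ⟨x, rfl⟩ := hg x
  constructor
  · rintro ⟨y, hy, hyx⟩ _ ⟨w, hw, rfl⟩
    rw [← hyx, hBg]
    exact hN.apply_eq_zero hy hw
  · intro hx
    refine Submodule.mem_map_of_mem (hN.mem_iff.2 fun w hw => ?_)
    rw [← hBg]
    exact hx _ (Submodule.mem_map_of_mem hw)

lemma exists_apply_eq_one (hB : BilinForm.IsSymm B) (hN : IsLagrangian B N) {f : E}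
    (hf : f ∉ N) : ∃ e ∈ N, B e f = 1 := by
  obtain ⟨y, hy, hfy⟩ : ∃ y ∈ N, B f y ≠ 0 := by
    simpa using mt hN.mem_iff.2 hf
  refine ⟨(B f y)⁻¹ • y, N.smul_mem _ hy, ?_⟩
  rw [map_smul, LinearMap.smul_apply, smul_eq_mul, hB.eq y f, inv_mul_cancel₀ hfy]

noncomputable def quotEquivDual [FiniteDimensional k E] (hN : IsLagrangian B N)
    (hB : B.Nondegenerate) : (E ⧸ N) ≃ₗ[k] Dual k N :=
  have hker : N = ker (N.dualRestrict ∘ₗ B) := by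
    conv_lhs => rw [hN]
    ext x
    exact ⟨fun h => mem_ker.2 (LinearMap.ext fun y => h y y.2),
      fun h y hy => LinearMap.congr_fun (mem_ker.1 h) ⟨y, hy⟩⟩
  (Submodule.quotEquivOfEq _ _ hker).trans <| quotKerEquivOfSurjective _ <|
    Subspace.dualRestrict_surjective.comp (BilinForm.toDual B hB).surjective

@[simp]
lemma quotEquivDual_mk [FiniteDimensional k E] (hN : IsLagrangian B N) (hB : B.Nondegenerate)
    (x : E) (y : N) : hN.quotEquivDual hB (Submodule.Quotient.mk x) y = B x y :=
  rfl

lemma det_eq_one [FiniteDimensional k E] (hN : IsLagrangian B N) (hB : B.Nondegenerate)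
    {φ : E →ₗ[k] E} (hφ : B.IsOrthogonal φ) (hNφ : N ≤ N.comap φ) : φ.det = 1 := by
  rw [φ.det_eq_det_mul_det N hNφ]
  refine (φ.restrict hNφ).det_mul_det_eq_one_of_dualMap_comp _ (hN.quotEquivDual hB) ?_
  ext x w
  simpa using hφ x w

end IsLagrangian

section Reflection

/- `transvection (B.flip v) v` is `x ↦ x + B x v • v`: for `B v v = -2` this is the reflection
`x ↦ x - (2 B x v / B v v) • v` along `v`. -/

variable {v : E}

lemma isOrthogonal_transvection_flip (hB : BilinForm.IsSymm B) (hv : B v v = -2) :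
    B.IsOrthogonal (transvection (B.flip v) v) := by
  intro x y
  simp only [transvection.apply, flip_apply, map_add, map_smul, LinearMap.add_apply, LinearMap.smul_apply,
    smul_eq_mul, hv, hB.eq v y]
  ring

lemma involutive_transvection_flip (hv : B v v = -2) :
    Function.Involutive (transvection (B.flip v) v) := by
  intro x
  simp only [transvection.apply, flip_apply, map_add, map_smul, hv]
  module

lemma det_transvection_flip [FiniteDimensional k E] (hv : B v v = -2) :
    (transvection (B.flip v) v).det = -1 := by
  rw [transvection.det, flip_apply, hv]
  norm_num

end Reflection

lemma map_transvection_flip_sub_inf_eq (hN : IsLagrangian B N) (hN' : IsLagrangian B N')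
    {e f : E} (he : e ∈ N) (hf : f ∈ N') (hef : B e f = 1) :
    N.map (transvection (B.flip (e - f)) (e - f)) ⊓ N' = N ⊓ N' ⊔ Submodule.span k {f} := by
  have hρ : ∀ u ∈ N,
      transvection (B.flip (e - f)) (e - f) u = (u - B u f • e) + B u f • f := by
    intro u hu
    rw [transvection.apply, flip_apply, map_sub, hN.apply_eq_zero hu he]
    module
  apply le_antisymm
  · rintro _ ⟨⟨u, hu, rfl⟩, hu'⟩
    rw [hρ u hu] at hu' ⊢
    refine Submodule.add_mem_sup ⟨N.sub_mem hu (N.smul_mem _ he), ?_⟩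
      (Submodule.smul_mem _ _ (Submodule.mem_span_singleton_self f))
    simpa using N'.sub_mem hu' (N'.smul_mem (B u f) hf)
  · refine sup_le (fun w ⟨hw, hw'⟩ => ⟨⟨w, hw, ?_⟩, hw'⟩) ?_
    · rw [hρ w hw, hN'.apply_eq_zero hw' hf]
      simp
    · rw [Submodule.span_singleton_le_iff_mem]
      exact ⟨⟨e, he, by rw [hρ e he, hef]; simp⟩, hf⟩

lemma finrank_map_transvection_flip_sub_inf [FiniteDimensional k E] (hN : IsLagrangian B N)
    (hN' : IsLagrangian B N') {e f : E} (he : e ∈ N) (hf : f ∈ N') (hef : B e f = 1) :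
    finrank k ↥(N.map (transvection (B.flip (e - f)) (e - f)) ⊓ N') =
      finrank k ↥(N ⊓ N') + 1 := by
  rw [map_transvection_flip_sub_inf_eq hN hN' he hf hef, Submodule.finrank_sup_span_singleton]
  exact fun hfN => one_ne_zero (hef ▸ hN.apply_eq_zero he hfN.1)

theorem IsLagrangian.det_eq_neg_one_pow [FiniteDimensional k E] (hB : BilinForm.IsSymm B)
    (hB' : B.Nondegenerate) (hN : IsLagrangian B N) (hN' : IsLagrangian B N')
    {φ : E →ₗ[k] E} (hφ : B.IsOrthogonal φ) (hmap : N.map φ = N') :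
    φ.det = (-1) ^ (finrank k N' - finrank k ↥(N ⊓ N')) := by
  induction hm : finrank k N' - finrank k ↥(N ⊓ N') generalizing N φ with
  | zero =>
    have hinf : N ⊓ N' = N' := Submodule.eq_of_le_of_finrank_le inf_le_right (by omega)
    rw [pow_zero]
    exact hN.det_eq_one hB' hφ (Submodule.map_le_iff_le_comap.1 (hmap ▸ hinf ▸ inf_le_left))
  | succ m ih =>
    have hN'N : ¬N' ≤ N := fun h => by rw [inf_eq_right.2 h] at hm; omega
    obtain ⟨f, hf, hfN⟩ := SetLike.not_le_iff_exists.1 hN'N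
    obtain ⟨e, he, hef⟩ := hN.exists_apply_eq_one hB hfN
    have hv : B (e - f) (e - f) = -2 := by
      simp only [map_sub, LinearMap.sub_apply, hN.apply_eq_zero he he, hN'.apply_eq_zero hf hf, hef,
        hB.eq f e]
      norm_num
    set ρ := transvection (B.flip (e - f)) (e - f)
    have hρρ : ρ ∘ₗ ρ = LinearMap.id := LinearMap.ext (involutive_transvection_flip hv)
    have hmapρ : (N.map ρ).map (φ ∘ₗ ρ) = N' := by
      rw [Submodule.map_comp, ← Submodule.map_comp (p := N), hρρ, Submodule.map_id, hmap]
    have hdet := ih (hN.map (involutive_transvection_flip hv).surjective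
        (isOrthogonal_transvection_flip hB hv)) (φ := φ ∘ₗ ρ)
      (fun x y => (hφ _ _).trans (isOrthogonal_transvection_flip hB hv x y)) hmapρ
      (by rw [finrank_map_transvection_flip_sub_inf hN hN' he hf hef]; omega)
    rw [det_comp, det_transvection_flip hv] at hdet
    rw [pow_succ]
    linear_combination -hdet

end

theorem isometry_det_eq_neg_one_pow_general
    {k E : Type*} [Field k] [AddCommGroup E] [Module k E] [FiniteDimensional k E]
    (n : ℕ) (hdim : Module.finrank k E = 2 * n)
    (B : E →ₗ[k] E →ₗ[k] k)
    (hsymm : ∀ x y : E, B x y = B y x)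
    (hnondeg : ∀ x : E, (∀ y : E, B x y = 0) → x = 0)
    (N N' : Submodule k E)
    (hN : N = perpB B N) (hN' : N' = perpB B N')
    (φ : E →ₗ[k] E)
    (hiso : ∀ x y : E, B (φ x) (φ y) = B x y)
    (hmap : N.map φ = N') :
    LinearMap.det φ = (-1 : k) ^ (n - Module.finrank k ↥(N ⊓ N')) := by
  have hB : LinearMap.BilinForm.IsSymm B := ⟨hsymm⟩
  have hB' : B.Nondegenerate := hB.isRefl.nondegenerate_iff_separatingLeft.2 hnondeg
  have hn : finrank k N' = n := by
    have := IsLagrangian.two_mul_finrank hN' hB.isRefl hB'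
    omega
  rw [← hn]
  exact IsLagrangian.det_eq_neg_one_pow hB hB' hN hN' hiso hmap

/-- Let `E` be a `2n`-dimensional vector space over a field `k` of
characteristic ≠ 2 with a nondegenerate symmetric bilinear form `B`. If `N`, `N'` are
Lagrangians and `φ` is an isometry of `(E,B)` with `φ(N) = N'`, then
`det φ = (-1)^(n - q)` where `q = dim (N ∩ N')`. -/
theorem isometry_det_eq_neg_one_pow
    {k E : Type*} [Field k] [AddCommGroup E] [Module k E] [FiniteDimensional k E]
    (hchar : (2 : k) ≠ 0)
    (n : ℕ) (hdim : Module.finrank k E = 2 * n)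
    (B : E →ₗ[k] E →ₗ[k] k)
    (hsymm : ∀ x y : E, B x y = B y x)
    (hnondeg : ∀ x : E, (∀ y : E, B x y = 0) → x = 0)
    (N N' : Submodule k E)
    (hN : N = perpB B N) (hN' : N' = perpB B N')
    (φ : E →ₗ[k] E) (hbij : Function.Bijective φ)
    (hiso : ∀ x y : E, B (φ x) (φ y) = B x y)
    (hmap : N.map φ = N') :
    LinearMap.det φ = (-1 : k) ^ (n - Module.finrank k ↥(N ⊓ N')) :=
  isometry_det_eq_neg_one_pow_general n hdim B hsymm hnondeg N N' hN hN' φ hiso hmap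
end

section
/- Let k be a field of characteristic ≠ 2 and let E be a k-vector space of dimension 2n (n ≥ 1) with a nondegenerate symmetric bilinear form B. Let K ⊆ E be a totally isotropic subspace of dimension n−1, and suppose there exists a Lagrangian L of (E, B) with K ⊆ L. Then there exist exactly two Lagrangians of (E, B) containing K. -/
open Module

/-!
Pick `e ∈ L \ K` and, using `K = (K^⊥)^⊥` and `2 ≠ 0`, an isotropic `f ∈ K^⊥` with
`B e f = 1`. Counting dimensions, `K^⊥ = K ⊕ k e ⊕ k f`, and `κ + a e + b f` has square
`2ab`. A Lagrangian `N ⊇ K` lies in `K^⊥` and consists of isotropic vectors, so it is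
contained in the union of `K ⊕ k e` and `K ⊕ k f`, hence in one of these two totally
isotropic subspaces, and equals it by maximality. Both are Lagrangians by dimension count.
-/

open Submodule

section PerpB

variable {k E : Type*} [Field k] [AddCommGroup E] [Module k E] {B : E →ₗ[k] E →ₗ[k] k}

theorem perpB_antitone {N₁ N₂ : Submodule k E} (h : N₁ ≤ N₂) : perpB B N₂ ≤ perpB B N₁ :=
  fun _ hx y hy => hx y (h hy)

theorem eq_of_eq_perpB_of_le {N M : Submodule k E} (hN : N = perpB B N)
    (hM : M ≤ perpB B M) (hNM : N ≤ M) : N = M :=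
  le_antisymm hNM (hM.trans ((perpB_antitone hNM).trans hN.ge))

theorem sup_span_singleton_le_perpB (hsymm : ∀ x y : E, B x y = B y x) {K : Submodule k E}
    (hK : K ≤ perpB B K) {v : E} (hv : v ∈ perpB B K) (hvv : B v v = 0) :
    K ⊔ span k {v} ≤ perpB B (K ⊔ span k {v}) := by
  have mem_perpB_sup : ∀ x ∈ perpB B K, B x v = 0 → x ∈ perpB B (K ⊔ span k {v}) := by
    intro x hxK hxv y hy
    obtain ⟨κ, hκ, w, hw, rfl⟩ := mem_sup.mp hy
    obtain ⟨a, rfl⟩ := mem_span_singleton.mp hw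
    simp [hxK κ hκ, hxv]
  refine sup_le (fun κ hκ => mem_perpB_sup κ (hK hκ) ?_)
    ((span_singleton_le_iff_mem _ _).mpr (mem_perpB_sup v hv hvv))
  rw [hsymm]
  exact hv κ hκ

theorem exists_isotropic_partner (hchar : (2 : k) ≠ 0) (hsymm : ∀ x y : E, B x y = B y x)
    {W : Submodule k E} {e f : E} (he : e ∈ W) (hee : B e e = 0) (hf : f ∈ W)
    (hef : B e f ≠ 0) : ∃ f' ∈ W, B e f' = 1 ∧ B f' f' = 0 := by
  set c := (B e f)⁻¹
  have hc : c * B e f = 1 := inv_mul_cancel₀ hef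
  -- correcting by a multiple of the isotropic `e` kills `B f' f'` without changing `B e f'`
  refine ⟨c • f - (c ^ 2 * B f f / 2) • e,
    W.sub_mem (W.smul_mem _ hf) (W.smul_mem _ he), ?_, ?_⟩
  · simpa [hee] using hc
  · simp only [map_sub, map_smul, LinearMap.sub_apply, LinearMap.smul_apply, smul_eq_mul,
      hee, hsymm f e]
    field_simp
    linear_combination (-4 * c ^ 2 * B f f) * hc

theorem perpB_eq_orthogonal (hsymm : ∀ x y : E, B x y = B y x) (N : Submodule k E) :
    perpB B N = LinearMap.BilinForm.orthogonal B N := by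
  ext x
  exact forall₂_congr fun y _ => by rw [hsymm]

theorem apply_self_add_smul_add_smul (hsymm : ∀ x y : E, B x y = B y x)
    {K : Submodule k E} (hK : K ≤ perpB B K) {e f : E} (he : e ∈ perpB B K)
    (hf : f ∈ perpB B K) (hee : B e e = 0) (hff : B f f = 0) (hef : B e f = 1)
    {κ : E} (hκ : κ ∈ K) (a b : k) :
    B (κ + a • e + b • f) (κ + a • e + b • f) = 2 * (a * b) := by
  simp only [map_add, map_smul, LinearMap.add_apply, LinearMap.smul_apply, smul_eq_mul,
    hsymm κ e, hsymm κ f, hsymm f e, hK hκ κ hκ, he κ hκ, hf κ hκ, hee, hff, hef]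
  ring

theorem mem_sup_or_mem_sup_of_apply_self_eq_zero (hchar : (2 : k) ≠ 0)
    (hsymm : ∀ x y : E, B x y = B y x) {K : Submodule k E} (hK : K ≤ perpB B K) {e f : E}
    (he : e ∈ perpB B K) (hf : f ∈ perpB B K) (hee : B e e = 0) (hff : B f f = 0)
    (hef : B e f = 1) {x : E} (hx : x ∈ K ⊔ span k {e} ⊔ span k {f}) (hxx : B x x = 0) :
    x ∈ K ⊔ span k {e} ∨ x ∈ K ⊔ span k {f} := by
  obtain ⟨y, hy, w, hw, rfl⟩ := mem_sup.mp hx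
  obtain ⟨κ, hκ, w', hw', rfl⟩ := mem_sup.mp hy
  obtain ⟨b, rfl⟩ := mem_span_singleton.mp hw
  obtain ⟨a, rfl⟩ := mem_span_singleton.mp hw'
  rw [apply_self_add_smul_add_smul hsymm hK he hf hee hff hef hκ] at hxx
  rcases mul_eq_zero.mp ((mul_eq_zero.mp hxx).resolve_left hchar) with rfl | rfl
  · rw [zero_smul, add_zero]
    exact .inr <| add_mem (mem_sup_left hκ) <|
      mem_sup_right (smul_mem _ _ (mem_span_singleton_self f))
  · rw [zero_smul, add_zero]
    exact .inl <| add_mem (mem_sup_left hκ) <|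
      mem_sup_right (smul_mem _ _ (mem_span_singleton_self e))

theorem notMem_sup_span_singleton_of_apply_eq_one (hsymm : ∀ x y : E, B x y = B y x)
    {K : Submodule k E} (hK : K ≤ perpB B K) {e f : E} (he : e ∈ perpB B K)
    (hee : B e e = 0) (hef : B e f = 1) : f ∉ K ⊔ span k {e} := fun hfKe => by
  have hfe := sup_span_singleton_le_perpB hsymm hK he hee hfKe e
    (mem_sup_right (mem_span_singleton_self e))
  rw [hsymm, hef] at hfe
  exact one_ne_zero hfe

theorem eq_or_eq_of_eq_perpB (hchar : (2 : k) ≠ 0) (hsymm : ∀ x y : E, B x y = B y x)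
    {K : Submodule k E} (hK : K ≤ perpB B K) {e f : E} (he : e ∈ perpB B K)
    (hf : f ∈ perpB B K) (hee : B e e = 0) (hff : B f f = 0) (hef : B e f = 1)
    (hspan : perpB B K ≤ K ⊔ span k {e} ⊔ span k {f}) {N : Submodule k E}
    (hN : N = perpB B N) (hKN : K ≤ N) : N = K ⊔ span k {e} ∨ N = K ⊔ span k {f} := by
  have hcover : (N : Set E) ⊆ ↑(K ⊔ span k {e}) ∪ ↑(K ⊔ span k {f}) := fun x hx =>
    have hxN : x ∈ perpB B N := hN.le hx
    mem_sup_or_mem_sup_of_apply_self_eq_zero hchar hsymm hK he hf hee hff hef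
      (hspan (perpB_antitone hKN hxN)) (hxN x hx)
  exact (AddSubgroupClass.subset_union.mp hcover).imp
    (eq_of_eq_perpB_of_le hN (sup_span_singleton_le_perpB hsymm hK he hee))
    (eq_of_eq_perpB_of_le hN (sup_span_singleton_le_perpB hsymm hK hf hff))

variable [FiniteDimensional k E]

theorem finrank_perpB_add_finrank (hsymm : ∀ x y : E, B x y = B y x)
    (hnondeg : ∀ x : E, (∀ y : E, B x y = 0) → x = 0) (N : Submodule k E) :
    finrank k (perpB B N) + finrank k N = finrank k E := by
  have hB : LinearMap.BilinForm.Nondegenerate B :=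
    (LinearMap.IsRefl.nondegenerate_iff_separatingLeft fun x y h => by rwa [hsymm]).mpr hnondeg
  rw [perpB_eq_orthogonal hsymm, LinearMap.BilinForm.finrank_orthogonal hB]
  have := N.finrank_le
  omega

theorem perpB_perpB (hsymm : ∀ x y : E, B x y = B y x)
    (hnondeg : ∀ x : E, (∀ y : E, B x y = 0) → x = 0) (N : Submodule k E) :
    perpB B (perpB B N) = N := by
  refine (eq_of_le_of_finrank_le (fun x hx y hy => by rw [hsymm]; exact hy x hx) ?_).symm
  have := finrank_perpB_add_finrank hsymm hnondeg N
  have := finrank_perpB_add_finrank hsymm hnondeg (perpB B N)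
  omega

theorem two_mul_finrank_of_eq_perpB (hsymm : ∀ x y : E, B x y = B y x)
    (hnondeg : ∀ x : E, (∀ y : E, B x y = 0) → x = 0) {N : Submodule k E}
    (hN : N = perpB B N) : 2 * finrank k N = finrank k E := by
  have := finrank_perpB_add_finrank hsymm hnondeg N
  rw [← hN] at this
  omega

theorem eq_perpB_of_le_perpB (hsymm : ∀ x y : E, B x y = B y x)
    (hnondeg : ∀ x : E, (∀ y : E, B x y = 0) → x = 0) {N : Submodule k E}
    (hN : N ≤ perpB B N) (hdim : 2 * finrank k N = finrank k E) : N = perpB B N := by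
  refine eq_of_le_of_finrank_le hN ?_
  have := finrank_perpB_add_finrank hsymm hnondeg N
  omega

theorem perpB_eq_sup_span_sup_span (hsymm : ∀ x y : E, B x y = B y x)
    (hnondeg : ∀ x : E, (∀ y : E, B x y = 0) → x = 0) {K : Submodule k E}
    (hK : K ≤ perpB B K) (hdim : 2 * (finrank k K + 1) = finrank k E) {e f : E}
    (he : e ∈ perpB B K) (hf : f ∈ perpB B K) (heK : e ∉ K) (hfKe : f ∉ K ⊔ span k {e}) :
    perpB B K = K ⊔ span k {e} ⊔ span k {f} := by
  refine (eq_of_le_of_finrank_le (sup_le (sup_le hK ((span_singleton_le_iff_mem _ _).mpr he))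
    ((span_singleton_le_iff_mem _ _).mpr hf)) ?_).symm
  rw [finrank_sup_span_singleton hfKe, finrank_sup_span_singleton heK]
  have := finrank_perpB_add_finrank hsymm hnondeg K
  omega

theorem sup_span_singleton_eq_perpB (hsymm : ∀ x y : E, B x y = B y x)
    (hnondeg : ∀ x : E, (∀ y : E, B x y = 0) → x = 0) {K : Submodule k E}
    (hK : K ≤ perpB B K) (hdim : 2 * (finrank k K + 1) = finrank k E) {v : E}
    (hv : v ∈ perpB B K) (hvv : B v v = 0) (hvK : v ∉ K) :
    K ⊔ span k {v} = perpB B (K ⊔ span k {v}) :=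
  eq_perpB_of_le_perpB hsymm hnondeg (sup_span_singleton_le_perpB hsymm hK hv hvv)
    (by rw [finrank_sup_span_singleton hvK, hdim])

theorem exists_hyperbolic_pair (hchar : (2 : k) ≠ 0) (hsymm : ∀ x y : E, B x y = B y x)
    (hnondeg : ∀ x : E, (∀ y : E, B x y = 0) → x = 0) {K L : Submodule k E}
    (hL : L = perpB B L) (hKL : K ≤ L) (hdim : 2 * (finrank k K + 1) = finrank k E) :
    ∃ e ∈ perpB B K, ∃ f ∈ perpB B K, B e e = 0 ∧ B f f = 0 ∧ B e f = 1 ∧ e ∉ K := by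
  have hKL' : K < L := hKL.lt_of_ne fun hKL => by
    have := two_mul_finrank_of_eq_perpB hsymm hnondeg hL
    rw [← hKL] at this
    omega
  obtain ⟨e, heL, heK⟩ := SetLike.exists_of_lt hKL'
  have he : e ∈ perpB B K := perpB_antitone hKL (hL.le heL)
  have hee : B e e = 0 := hL.le heL e heL
  obtain ⟨f₀, hf₀, hef₀⟩ : ∃ f₀ ∈ perpB B K, B e f₀ ≠ 0 := by
    by_contra! h
    exact heK (perpB_perpB hsymm hnondeg K ▸ h)
  obtain ⟨f, hf, hef, hff⟩ := exists_isotropic_partner hchar hsymm he hee hf₀ hef₀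
  exact ⟨e, he, f, hf, hee, hff, hef, heK⟩

end PerpB

/-- Let `E` be a `2n`-dimensional (`n ≥ 1`) vector space over a field of
characteristic ≠ 2 with a nondegenerate symmetric bilinear form `B`. If `K` is a
totally isotropic subspace of dimension `n - 1` contained in some Lagrangian, then
there exist exactly two Lagrangians of `(E,B)` containing `K`. -/
theorem two_lagrangians_containing_codim_one_isotropic
    {k E : Type*} [Field k] [AddCommGroup E] [Module k E] [FiniteDimensional k E]
    (hchar : (2 : k) ≠ 0)
    (n : ℕ) (hn : 1 ≤ n) (hdim : Module.finrank k E = 2 * n)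
    (B : E →ₗ[k] E →ₗ[k] k)
    (hsymm : ∀ x y : E, B x y = B y x)
    (hnondeg : ∀ x : E, (∀ y : E, B x y = 0) → x = 0)
    (K : Submodule k E) (hKiso : K ≤ perpB B K)
    (hKdim : Module.finrank k K = n - 1)
    (L : Submodule k E) (hL : L = perpB B L) (hKL : K ≤ L) :
    ∃ L₁ L₂ : Submodule k E, L₁ ≠ L₂ ∧
      ∀ N : Submodule k E, (N = perpB B N ∧ K ≤ N) ↔ (N = L₁ ∨ N = L₂) := by
  have hKdim' : 2 * (finrank k K + 1) = finrank k E := by omega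
  obtain ⟨e, he, f, hf, hee, hff, hef, heK⟩ :=
    exists_hyperbolic_pair hchar hsymm hnondeg hL hKL hKdim'
  have hfKe := notMem_sup_span_singleton_of_apply_eq_one hsymm hKiso he hee hef
  have hspan := perpB_eq_sup_span_sup_span hsymm hnondeg hKiso hKdim' he hf heK hfKe
  refine ⟨K ⊔ span k {e}, K ⊔ span k {f},
    fun h => hfKe (h ▸ mem_sup_right (mem_span_singleton_self f)), fun N => ⟨?_, ?_⟩⟩
  · rintro ⟨hN, hKN⟩
    exact eq_or_eq_of_eq_perpB hchar hsymm hKiso he hf hee hff hef hspan.le hN hKN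
  · rintro (rfl | rfl)
    · exact ⟨sup_span_singleton_eq_perpB hsymm hnondeg hKiso hKdim' he hee heK, le_sup_left⟩
    · exact ⟨sup_span_singleton_eq_perpB hsymm hnondeg hKiso hKdim' hf hff
        fun hfK => hfKe (mem_sup_left hfK), le_sup_left⟩
end
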